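/- arXiv:2602.13558 — 5 statements merged into one kernel-verified Lean document; each statement's English description precedes it below -/
import Mathlib

section
/- If f : ℕ≥1 → ℕ satisfies f(1) = 1 and, for every n > 1, f(n) = mex { f(m) XOR f(m+1) XOR ⋯ XOR f(n-1) : m = 1, 2, …, n } (where the sum for m = n is the empty XOR, equal to 0), then f(n) = 2^(ν₂(n)) for all n ≥ 1, where ν₂(n) is the 2-adic valuation of n. -/
/-- least nonnegative integer not in `S` -/
noncomputable def mex (S : Set ℕ) : ℕ := sInf {n | n ∉ S}

/-- XOR of `f k` for `k ∈ [m, n)` -/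
def xorIco (f : ℕ → ℕ) (m n : ℕ) : ℕ :=
  ((List.range' m (n - m)).map f).foldr (· ^^^ ·) 0

/-!
Let `gray n = n ^^^ n / 2` be the Gray code; it is additive for `^^^` and restricts to a bijection of
`[0, 2 ^ k)`. Since `n ^^^ (n - 1) = 2 ^ (ν₂ n + 1) - 1`, the ruler value `2 ^ ν₂ n` equals
`gray (n - 1) ^^^ gray n`, so by strong induction the XOR of `f` over `[m, n)` telescopes to
`gray ((m - 1) ^^^ (n - 1))`. With `N = n - 1`, whose last `ν = ν₂ n` bits are all ones, every
`t < 2 ^ ν` is `j ^^^ N` for some `j ≤ N`, so all values below `2 ^ ν` occur; `2 ^ ν` itself is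
`gray (2 ^ (ν + 1) - 1)` and would need `j = N ^^^ (2 ^ (ν + 1) - 1) = N + 1`.
-/

theorem mex_eq_of_notMem_of_forall_lt_mem {S : Set ℕ} {a : ℕ} (ha : a ∉ S)
    (hlt : ∀ b < a, b ∈ S) : mex S = a :=
  le_antisymm (Nat.sInf_le ha) (le_csInf ⟨a, ha⟩ fun _ hb => not_lt.1 fun h => hb (hlt _ h))

theorem xorIco_self (f : ℕ → ℕ) (m : ℕ) : xorIco f m m = 0 := by
  simp [xorIco]

theorem xorIco_eq_xor_xorIco (f : ℕ → ℕ) {m n : ℕ} (h : m < n) :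
    xorIco f m n = f m ^^^ xorIco f (m + 1) n := by
  rw [xorIco, xorIco, show n - m = n - (m + 1) + 1 by omega, List.range'_succ]
  rfl

theorem xorIco_congr {f g : ℕ → ℕ} {m n : ℕ} (h : ∀ j, m ≤ j → j < n → f j = g j) :
    xorIco f m n = xorIco g m n := by
  refine congrArg _ (List.map_congr_left fun j hj => ?_)
  obtain ⟨hmj, hjn⟩ := List.mem_range'_1.1 hj
  exact h j hmj (by omega)

theorem xorIco_xor_succ (F : ℕ → ℕ) {m n : ℕ} (h : m ≤ n) :
    xorIco (fun j => F j ^^^ F (j + 1)) m n = F m ^^^ F n := by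
  obtain ⟨k, rfl⟩ := Nat.exists_eq_add_of_le h
  induction k generalizing m with
  | zero => simp [xorIco_self]
  | succ k ih =>
    rw [xorIco_eq_xor_xorIco _ (by omega), show m + (k + 1) = m + 1 + k by omega,
      ih (by omega)]
    grind

namespace Nat

theorem two_pow_mul_xor_eq_add {k s : ℕ} (q : ℕ) (hs : s < 2 ^ k) :
    2 ^ k * q ^^^ s = 2 ^ k * q + s := by
  apply Nat.eq_of_testBit_eq
  intro j
  rw [testBit_xor, testBit_two_pow_mul_add q hs j, testBit_two_pow_mul]
  by_cases h : j < k
  · simp [h, Nat.not_le_of_lt h]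
  · have hsj : s.testBit j = false :=
      testBit_lt_two_pow (hs.trans_le (Nat.pow_le_pow_right two_pos (Nat.le_of_not_lt h)))
    simp [h, Nat.le_of_not_lt h, hsj]

theorem two_pow_mul_add_xor {k s t : ℕ} (q : ℕ) (hs : s < 2 ^ k) (ht : t < 2 ^ k) :
    (2 ^ k * q + s) ^^^ t = 2 ^ k * q + (s ^^^ t) := by
  rw [← two_pow_mul_xor_eq_add q hs, ← two_pow_mul_xor_eq_add q (xor_lt_two_pow hs ht),
    Nat.xor_assoc]

theorem two_pow_mul_add_xor_two_pow_mul_add {k s t : ℕ} (q : ℕ) (hs : s < 2 ^ k)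
    (ht : t < 2 ^ k) : (2 ^ k * q + s) ^^^ (2 ^ k * q + t) = s ^^^ t := by
  rw [← two_pow_mul_xor_eq_add q hs, ← two_pow_mul_xor_eq_add q ht]
  grind

theorem two_pow_xor_two_pow_sub_one (k : ℕ) : 2 ^ k ^^^ (2 ^ k - 1) = 2 ^ (k + 1) - 1 := by
  have := two_pow_mul_xor_eq_add (k := k) 1 (Nat.sub_lt (Nat.two_pow_pos k) one_pos)
  rw [mul_one] at this
  rw [this, pow_succ]
  omega

theorem exists_eq_two_pow_padicValNat_succ_mul_add {n : ℕ} (hn : n ≠ 0) :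
    ∃ q, n = 2 ^ (padicValNat 2 n + 1) * q + 2 ^ padicValNat 2 n := by
  obtain ⟨k, _, ⟨q, rfl⟩, rfl⟩ := exists_eq_two_pow_mul_odd hn
  have hodd : padicValNat 2 (2 * q + 1) = 0 := padicValNat.eq_zero_of_not_dvd (by omega)
  rw [padicValNat.mul (by positivity) (by omega), padicValNat.prime_pow, hodd, add_zero]
  exact ⟨q, by ring⟩

theorem xor_sub_one {n : ℕ} (hn : n ≠ 0) : n ^^^ (n - 1) = 2 ^ (padicValNat 2 n + 1) - 1 := by
  obtain ⟨q, hq⟩ := exists_eq_two_pow_padicValNat_succ_mul_add hn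
  set ν := padicValNat 2 n
  have hpow : 2 ^ (ν + 1) = 2 * 2 ^ ν := by rw [pow_succ']
  have hpos := Nat.two_pow_pos ν
  rw [show n - 1 = 2 ^ (ν + 1) * q + (2 ^ ν - 1) by omega, hq,
    two_pow_mul_add_xor_two_pow_mul_add q (by omega) (by omega), two_pow_xor_two_pow_sub_one]

def gray (n : ℕ) : ℕ := n ^^^ n / 2

theorem gray_xor (a b : ℕ) : gray (a ^^^ b) = gray a ^^^ gray b := by
  rw [gray, gray, gray, xor_div_two]
  grind

theorem gray_injective : Function.Injective gray := by
  intro a b h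
  have h0 : gray (a ^^^ b) = 0 := by rw [gray_xor, h, Nat.xor_self]
  rw [gray, Nat.xor_eq_zero_iff] at h0
  exact Nat.xor_eq_zero_iff.1 (by omega)

theorem gray_lt_two_pow {k t : ℕ} (h : t < 2 ^ k) : gray t < 2 ^ k :=
  xor_lt_two_pow h ((Nat.div_le_self t 2).trans_lt h)

theorem exists_gray_eq_of_lt_two_pow {k v : ℕ} (hv : v < 2 ^ k) :
    ∃ t < 2 ^ k, gray t = v := by
  have hsurj := Finset.surj_on_of_inj_on_of_card_le (s := Finset.range (2 ^ k))
    (t := Finset.range (2 ^ k)) (fun a _ => gray a)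
    (fun a ha => Finset.mem_range.2 (gray_lt_two_pow (Finset.mem_range.1 ha)))
    (fun a b _ _ h => gray_injective h) le_rfl
  obtain ⟨t, ht, hgt⟩ := hsurj v (Finset.mem_range.2 hv)
  exact ⟨t, Finset.mem_range.1 ht, hgt.symm⟩

theorem gray_two_pow_succ_sub_one (k : ℕ) : gray (2 ^ (k + 1) - 1) = 2 ^ k := by
  have hdiv : (2 ^ (k + 1) - 1) / 2 = 2 ^ k - 1 := by rw [pow_succ]; omega
  rw [gray, hdiv, ← two_pow_xor_two_pow_sub_one, Nat.xor_assoc, Nat.xor_self, Nat.xor_zero]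

theorem two_pow_padicValNat_eq_gray_xor_gray {n : ℕ} (hn : n ≠ 0) :
    2 ^ padicValNat 2 n = gray (n - 1) ^^^ gray n := by
  rw [← gray_xor, Nat.xor_comm, xor_sub_one hn, gray_two_pow_succ_sub_one]

end Nat

open Nat

theorem xorIco_two_pow_padicValNat {m n : ℕ} (hm : 1 ≤ m) (hmn : m ≤ n) :
    xorIco (fun j => 2 ^ padicValNat 2 j) m n = gray ((m - 1) ^^^ (n - 1)) := by
  rw [gray_xor, ← xorIco_xor_succ (fun j => gray (j - 1)) hmn]
  exact xorIco_congr fun j hj _ => by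
    simpa using two_pow_padicValNat_eq_gray_xor_gray (n := j) (by omega)

theorem mex_gray_xor (N : ℕ) :
    mex {v | ∃ j ≤ N, v = gray (j ^^^ N)} = 2 ^ padicValNat 2 (N + 1) := by
  obtain ⟨q, hq⟩ := exists_eq_two_pow_padicValNat_succ_mul_add (n := N + 1) (by omega)
  set ν := padicValNat 2 (N + 1)
  have hpow : 2 ^ (ν + 1) = 2 ^ ν * 2 := pow_succ 2 ν
  have hN : N = 2 ^ ν * (2 * q) + (2 ^ ν - 1) := by
    have := Nat.two_pow_pos ν
    rw [← mul_assoc, ← hpow]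
    omega
  apply mex_eq_of_notMem_of_forall_lt_mem
  · rintro ⟨j, hj, hv⟩
    rw [← gray_two_pow_succ_sub_one, ← xor_sub_one (n := N + 1) (by omega)] at hv
    have := Nat.xor_left_inj.1 (gray_injective hv)
    omega
  · intro b hb
    obtain ⟨t, ht, rfl⟩ := exists_gray_eq_of_lt_two_pow hb
    refine ⟨N ^^^ t, ?_, by rw [Nat.xor_comm N, Nat.xor_assoc, Nat.xor_self, Nat.xor_zero]⟩
    have hlow : (2 ^ ν - 1) ^^^ t < 2 ^ ν := xor_lt_two_pow (by omega) ht
    rw [hN, two_pow_mul_add_xor _ (by omega) ht]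
    omega

theorem stmt0 (f : ℕ → ℕ) (h1 : f 1 = 1)
    (hrec : ∀ n > 1, f n = mex {v | ∃ m, 1 ≤ m ∧ m ≤ n ∧ v = xorIco f m n}) :
    ∀ n ≥ 1, f n = 2 ^ (padicValNat 2 n) := by
  intro n hn
  induction n using Nat.strong_induction_on with
  | _ n ih =>
  rcases hn.eq_or_lt with rfl | hn1
  · simpa using h1
  have hxor : ∀ m, 1 ≤ m → m ≤ n → xorIco f m n = gray ((m - 1) ^^^ (n - 1)) :=
    fun m hm hmn => by
      rw [xorIco_congr fun j hj hjn => ih j hjn (by omega), xorIco_two_pow_padicValNat hm hmn]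
  have hset : {v | ∃ m, 1 ≤ m ∧ m ≤ n ∧ v = xorIco f m n} =
      {v | ∃ j ≤ n - 1, v = gray (j ^^^ (n - 1))} := by
    ext v
    constructor
    · rintro ⟨m, hm, hmn, rfl⟩
      exact ⟨m - 1, by omega, hxor m hm hmn⟩
    · rintro ⟨j, hj, rfl⟩
      exact ⟨j + 1, by omega, by omega, by rw [hxor _ (by omega) (by omega), Nat.add_sub_cancel]⟩
  rw [hrec n hn1, hset, mex_gray_xor, Nat.sub_add_cancel hn]
end

section
/- Let G(n,r) = C(n,r) mod 2 (binomial coefficient parity), and define g : ℕ → ℕ by g(d) = (d mod 3) + 1, and s(d,m) = XOR_{k=m}^{d−1} G(d−m, k−m)·g(k) for 0 ≤ m ≤ d (where 1·a = a, 0·a = 0, and the empty XOR is 0). Then s(d,m) = 0 if d ≡ m (mod 3), and s(d,m) = (m mod 3) + 1 if d ≢ m (mod 3). -/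
/-- binomial coefficient parity -/
def G (n r : ℕ) : ℕ := Nat.choose n r % 2

def g (d : ℕ) : ℕ := d % 3 + 1

def s (d m : ℕ) : ℕ := xorIco (fun k => G (d - m) (k - m) * g k) m d

def X (f : ℕ → ℕ) (n : ℕ) : ℕ := ((List.range n).map f).foldr (· ^^^ ·) 0

lemma xor_lc (a b c : ℕ) : a ^^^ (b ^^^ c) = b ^^^ (a ^^^ c) := by
  rw [← Nat.xor_assoc, Nat.xor_comm a b, Nat.xor_assoc]

lemma xor_cl (a b : ℕ) : a ^^^ (a ^^^ b) = b := by
  rw [← Nat.xor_assoc, Nat.xor_self, Nat.zero_xor]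

lemma foldr_xor (l : List ℕ) (init : ℕ) :
    l.foldr (· ^^^ ·) init = l.foldr (· ^^^ ·) 0 ^^^ init := by
  induction l with
  | nil => simp
  | cons a t ih => simp [ih, Nat.xor_assoc]

lemma X_succ_right (f : ℕ → ℕ) (n : ℕ) : X f (n + 1) = X f n ^^^ f n := by
  rw [X, List.range_succ, List.map_append, List.foldr_append, foldr_xor]
  simp [X]

lemma X_succ_left (f : ℕ → ℕ) (n : ℕ) :
    X f (n + 1) = f 0 ^^^ X (fun j => f (j + 1)) n := by
  simp only [X, List.range_succ_eq_map, List.map_cons, List.map_map, List.foldr_cons]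
  rfl

lemma X_xor (f h : ℕ → ℕ) (n : ℕ) :
    X (fun j => f j ^^^ h j) n = X f n ^^^ X h n := by
  induction n with
  | zero => simp [X]
  | succ n ih =>
    rw [X_succ_right, X_succ_right, X_succ_right, ih]
    simp [Nat.xor_assoc, Nat.xor_comm, xor_lc, xor_cl, Nat.xor_self, Nat.xor_zero, Nat.zero_xor]

lemma mul_split (a b v : ℕ) :
    ((a + b) % 2) * v = (a % 2 * v) ^^^ (b % 2 * v) := by
  rcases Nat.mod_two_eq_zero_or_one a with h1 | h1 <;>
    rcases Nat.mod_two_eq_zero_or_one b with h2 | h2 <;>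
      simp [Nat.add_mod, h1, h2]

def t (n a : ℕ) : ℕ := X (fun j => G n j * ((a + j) % 3 + 1)) n

lemma t_formula : ∀ n a : ℕ, t n a = if n % 3 = 0 then 0 else a % 3 + 1 := by
  intro n
  induction n with
  | zero => intro a; simp [t, X]
  | succ n ih =>
    intro a
    set F : ℕ → ℕ := fun j => G n j * ((a + j) % 3 + 1) with hF
    have hF0 : F 0 = a % 3 + 1 := by simp [hF, G]
    have hFn : F n = (a + n) % 3 + 1 := by simp [hF, G]
    have key : t (n + 1) a
        = t n a ^^^ t n (a + 1) ^^^ ((a + n) % 3 + 1) := by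
      rw [t, X_succ_left]
      have hG0 : G (n + 1) 0 * ((a + 0) % 3 + 1) = a % 3 + 1 := by
        simp [G]
      rw [hG0]
      have hfun : (fun j => G (n + 1) (j + 1) * ((a + (j + 1)) % 3 + 1))
          = fun j => (G n j * ((a + (j + 1)) % 3 + 1)) ^^^
              (G n (j + 1) * ((a + (j + 1)) % 3 + 1)) := by
        funext j
        rw [G, Nat.choose_succ_succ, mul_split]
        rfl
      rw [hfun, X_xor]
      have h1 : X (fun j => G n j * ((a + (j + 1)) % 3 + 1)) n = t n (a + 1) := by
        rw [t]
        congr 1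
        funext j
        congr 2
        omega
      have h2 : X (fun j => G n (j + 1) * ((a + (j + 1)) % 3 + 1)) n
          = X F n ^^^ F n ^^^ F 0 := by
        have hshift : F 0 ^^^ X (fun j => F (j + 1)) n = X F n ^^^ F n := by
          rw [← X_succ_left, X_succ_right]
        have : X (fun j => F (j + 1)) n = F 0 ^^^ (X F n ^^^ F n) := by
          rw [← hshift, ← Nat.xor_assoc, Nat.xor_self, Nat.zero_xor]
        have heq : (fun j => G n (j + 1) * ((a + (j + 1)) % 3 + 1))
            = fun j => F (j + 1) := rfl
        rw [heq, this]
        simp [Nat.xor_assoc, Nat.xor_comm, xor_lc, xor_cl, Nat.xor_self, Nat.xor_zero, Nat.zero_xor]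
      rw [h1, h2, hF0, hFn]
      have ht : t n a = X F n := rfl
      rw [ht]
      simp [Nat.xor_assoc, Nat.xor_comm, xor_lc, xor_cl, Nat.xor_self, Nat.xor_zero, Nat.zero_xor]
    rw [key, ih a, ih (a + 1)]
    have ha : a % 3 < 3 := Nat.mod_lt _ (by norm_num)
    have hn : n % 3 < 3 := Nat.mod_lt _ (by norm_num)
    have e1 : (a + 1) % 3 = (a % 3 + 1) % 3 := by omega
    have e2 : (a + n) % 3 = (a % 3 + n % 3) % 3 := by omega
    have e3 : (n + 1) % 3 = (n % 3 + 1) % 3 := by omega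
    rw [e1, e2, e3]
    interval_cases h : a % 3 <;> interval_cases h2 : n % 3 <;> decide

lemma s_eq_t (d m : ℕ) (h : m ≤ d) : s d m = t (d - m) m := by
  rw [s, t, xorIco, X, List.range'_eq_map_range, List.map_map]
  have : ((fun k => G (d - m) (k - m) * g k) ∘ fun x => m + x)
      = fun j => G (d - m) j * ((m + j) % 3 + 1) := by
    funext j
    simp [Function.comp, g, Nat.add_sub_cancel_left]
  rw [this]

theorem stmt5 : ∀ d m : ℕ, m ≤ d →
    s d m = if d % 3 = m % 3 then 0 else m % 3 + 1 := by
  intro d m h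
  rw [s_eq_t d m h, t_formula]
  split_ifs <;> omega
end

section
/- Let ASM(n) = { (x,y,z) ∈ ℕ³ : x + y + z ≤ n − 2 } with order (x,y,z) ≤ (x₀,y₀,z₀) iff x ≥ x₀, y ≥ y₀, z ≤ z₀, and x₀+y₀+z₀ ≤ x+y+z. For (x₀,y₀,z₀) ∈ ASM(n) with r₀ = n−2−(x₀+y₀) and s₀ = z₀, the set of pairs (r,s) = (n−2−(x+y), z) ranging over elements (x,y,z) of the principal order ideal below (x₀,y₀,z₀) is exactly { (r,s) : 0 ≤ s ≤ s₀ and 0 ≤ r − s ≤ r₀ − s₀ }. -/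
def asmMem (n : ℕ) (p : ℕ × ℕ × ℕ) : Prop := p.1 + p.2.1 + p.2.2 ≤ n - 2

def asmLe (p p₀ : ℕ × ℕ × ℕ) : Prop :=
  p₀.1 ≤ p.1 ∧ p₀.2.1 ≤ p.2.1 ∧ p.2.2 ≤ p₀.2.2 ∧
    p₀.1 + p₀.2.1 + p₀.2.2 ≤ p.1 + p.2.1 + p.2.2

theorem stmt11 (n x₀ y₀ z₀ : ℕ) (hmem : asmMem n (x₀, y₀, z₀))
    (r₀ : ℕ) (hr₀ : r₀ = n - 2 - (x₀ + y₀)) (s₀ : ℕ) (hs₀ : s₀ = z₀) :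
    {q : ℕ × ℕ | ∃ p : ℕ × ℕ × ℕ, asmMem n p ∧ asmLe p (x₀, y₀, z₀) ∧
        q = (n - 2 - (p.1 + p.2.1), p.2.2)}
      = {q : ℕ × ℕ | q.2 ≤ s₀ ∧ q.2 ≤ q.1 ∧ q.1 - q.2 ≤ r₀ - s₀} := by
  ext ⟨r, s⟩
  simp only [Set.mem_setOf_eq, asmMem, asmLe, Prod.mk.injEq] at *
  constructor
  · rintro ⟨⟨x, y, z⟩, h1, ⟨h2, h3, h4, h5⟩, hq1, hq2⟩
    simp only at *
    omega
  · rintro ⟨h1, h2, h3⟩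
    refine ⟨(x₀ + (n - 2 - r - (x₀ + y₀)), y₀, s), ?_, ?_, ?_, ?_⟩ <;> simp <;> omega
end

section
/- Let ASM(n) be ℕ³ points with x+y+z ≤ n−2, ordered by (x,y,z) ≤ (x₀,y₀,z₀) iff x ≥ x₀, y ≥ y₀, z ≤ z₀, x₀+y₀+z₀ ≤ x+y+z. If (x₁,y₁,z₁), (x₂,y₂,z₂) ∈ ASM(n) satisfy x₁+y₁ = x₂+y₂ and z₁ = z₂, then the map F(x,y,z) = (x + (x₂−x₁), y − (x₂−x₁), z) is a well-defined order isomorphism from the principal order ideal below (x₁,y₁,z₁) onto the principal order ideal below (x₂,y₂,z₂). -/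
/-- the principal order ideal of `p₀` inside ASM(n) -/
def ideal (n : ℕ) (p₀ : ℕ × ℕ × ℕ) : Set (ℕ × ℕ × ℕ) :=
  {p | asmMem n p ∧ asmLe p p₀}

theorem stmt12 (n x₁ y₁ z₁ x₂ y₂ z₂ : ℕ)
    (h₁ : asmMem n (x₁, y₁, z₁)) (h₂ : asmMem n (x₂, y₂, z₂))
    (hxy : x₁ + y₁ = x₂ + y₂) (hz : z₁ = z₂)
    (F : ℕ × ℕ × ℕ → ℕ × ℕ × ℕ)
    (hF : F = fun p => (p.1 + x₂ - x₁, p.2.1 + x₁ - x₂, p.2.2)) :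
    Set.BijOn F (ideal n (x₁, y₁, z₁)) (ideal n (x₂, y₂, z₂)) ∧
    ∀ p ∈ ideal n (x₁, y₁, z₁), ∀ q ∈ ideal n (x₁, y₁, z₁),
      (asmLe p q ↔ asmLe (F p) (F q)) := by
  subst hF hz
  simp only [ideal, asmMem, asmLe, Set.mem_setOf_eq] at *
  constructor
  · refine ⟨?_, ?_, ?_⟩
    · rintro ⟨a, b, c⟩ hp
      simp only [Set.mem_setOf_eq] at *
      omega
    · rintro ⟨a, b, c⟩ hp ⟨d, e, f⟩ hq h
      simp only [Set.mem_setOf_eq, Prod.mk.injEq] at *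
      refine ⟨?_, ?_, ?_⟩ <;> omega
    · rintro ⟨a, b, c⟩ hq
      simp only [Set.mem_setOf_eq] at hq
      refine ⟨(a + x₁ - x₂, b + x₂ - x₁, c), ?_, ?_⟩
      · simp only [Set.mem_setOf_eq]; omega
      · simp only [Prod.mk.injEq]; exact ⟨by omega, by omega, trivial⟩
  · rintro ⟨a, b, c⟩ hp ⟨d, e, f⟩ hq
    simp only [Set.mem_setOf_eq] at *
    constructor <;> rintro ⟨u, v, w, s⟩ <;> refine ⟨?_, ?_, ?_, ?_⟩ <;> omega
end

section
/- Define g : ℕ² → Fin 2 on pairs (r,s) with 0 ≤ s ≤ r by: g(r,s) = 1 iff (r,s) = (0,0) or (r,s) = (2k+1, k) or (r,s) = (2k+1, k+1) for some k ∈ ℕ; otherwise g(r,s) = 0. Fix (r₀,s₀) with 0 ≤ s₀ ≤ r₀, and let N = Σ over pairs (r,s) ≠ (r₀,s₀) with 0 ≤ s ≤ s₀, 0 ≤ r−s ≤ r₀−s₀ of (r₀ − r + 1)·g(r,s). Then N is even if and only if g(r₀,s₀) = 1. -/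
/-- the positions (r,s) whose Grundy value is 1 -/
def good (p : ℕ × ℕ) : Prop :=
  p = (0, 0) ∨ ∃ k : ℕ, p.1 = 2 * k + 1 ∧ (p.2 = k ∨ p.2 = k + 1)

open Classical in
lemma T_odd (r₀ s₀ : ℕ) (h : s₀ ≤ r₀) :
    (∑ p ∈ (Finset.range (r₀ + 1) ×ˢ Finset.range (s₀ + 1)).filter
        (fun p => p.2 ≤ p.1 ∧ p.1 - p.2 ≤ r₀ - s₀),
      (r₀ - p.1 + 1) * (if good p then 1 else 0)) % 2 = 1 := by
  classical
  set d := r₀ - s₀ with hd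
  set A := min (s₀ + 1) d with hA
  set B := min s₀ (d + 1) with hB
  set G : Finset (ℕ × ℕ) :=
    insert (0,0) ((Finset.range A).image (fun k => (2*k+1, k)) ∪
      (Finset.range B).image (fun k => (2*k+1, k+1))) with hG
  have hsub : G ⊆ (Finset.range (r₀ + 1) ×ˢ Finset.range (s₀ + 1)).filter
        (fun p => p.2 ≤ p.1 ∧ p.1 - p.2 ≤ r₀ - s₀) := by
    intro p hp
    simp only [hG, Finset.mem_insert, Finset.mem_union, Finset.mem_image,
      Finset.mem_range] at hp
    simp only [Finset.mem_filter, Finset.mem_product, Finset.mem_range]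
    rcases hp with rfl | ⟨k, hk, rfl⟩ | ⟨k, hk, rfl⟩ <;> simp <;> omega
  have hzero : ∀ p ∈ (Finset.range (r₀ + 1) ×ˢ Finset.range (s₀ + 1)).filter
        (fun p => p.2 ≤ p.1 ∧ p.1 - p.2 ≤ r₀ - s₀), p ∉ G →
      (r₀ - p.1 + 1) * (if good p then 1 else 0) = 0 := by
    rintro ⟨r, s⟩ hp hpG
    simp only [Finset.mem_filter, Finset.mem_product, Finset.mem_range] at hp
    have : ¬ good (r, s) := by
      intro hg
      apply hpG
      simp only [hG, Finset.mem_insert, Finset.mem_union, Finset.mem_image,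
        Finset.mem_range]
      rcases hg with h0 | ⟨k, hk1, hk2⟩
      · left; exact h0
      · simp only at hk1 hk2
        rcases hk2 with h2 | h2
        · refine Or.inr (Or.inl ⟨k, by omega, ?_⟩)
          rw [hk1, h2]
        · refine Or.inr (Or.inr ⟨k, by omega, ?_⟩)
          rw [hk1, h2]
    rw [if_neg this, mul_zero]
  rw [← Finset.sum_subset hsub hzero]
  have hnotin : ((0,0) : ℕ × ℕ) ∉ (Finset.range A).image (fun k => (2*k+1, k)) ∪
      (Finset.range B).image (fun k => (2*k+1, k+1)) := by
    simp only [Finset.mem_union, Finset.mem_image, Finset.mem_range]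
    push_neg
    constructor <;> intro k hk <;> simp [Prod.ext_iff]
  have hdisj : Disjoint ((Finset.range A).image (fun k => (2*k+1, k)))
      ((Finset.range B).image (fun k => (2*k+1, k+1))) := by
    rw [Finset.disjoint_left]
    rintro p hp1 hp2
    simp only [Finset.mem_image, Finset.mem_range] at hp1 hp2
    obtain ⟨k, _, rfl⟩ := hp1
    obtain ⟨j, _, hj⟩ := hp2
    have h1 : 2*j+1 = 2*k+1 := congrArg Prod.fst hj
    have h2 : j+1 = k := congrArg Prod.snd hj
    omega
  rw [hG, Finset.sum_insert hnotin, Finset.sum_union hdisj,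
    Finset.sum_image (fun a _ b _ hab => by simpa using congrArg Prod.snd hab),
    Finset.sum_image (fun a _ b _ hab => by
      have := congrArg Prod.snd hab; simp only at this; omega)]
  have hgood1 : ∀ k : ℕ, good (2*k+1, k) := fun k => Or.inr ⟨k, rfl, Or.inl rfl⟩
  have hgood2 : ∀ k : ℕ, good (2*k+1, k+1) := fun k => Or.inr ⟨k, rfl, Or.inr rfl⟩
  have hgood0 : good (0,0) := Or.inl rfl
  simp only [if_pos hgood0, if_pos (hgood1 _), if_pos (hgood2 _), mul_one]
  have hsumA : (∑ k ∈ Finset.range A, (r₀ - (2*k+1) + 1)) % 2 = A * (r₀ % 2) % 2 := by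
    have hc : ∀ k ∈ Finset.range A, (r₀ - (2*k+1) + 1) % 2 = r₀ % 2 := by
      intro k hk
      simp only [Finset.mem_range] at hk
      have : 2*k+1 ≤ r₀ := by omega
      omega
    rw [Finset.sum_nat_mod, Finset.sum_congr rfl hc, Finset.sum_const,
      Finset.card_range, smul_eq_mul]
  have hsumB : (∑ k ∈ Finset.range B, (r₀ - (2*k+1) + 1)) % 2 = B * (r₀ % 2) % 2 := by
    have hc : ∀ k ∈ Finset.range B, (r₀ - (2*k+1) + 1) % 2 = r₀ % 2 := by
      intro k hk
      simp only [Finset.mem_range] at hk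
      have : 2*k+1 ≤ r₀ := by omega
      omega
    rw [Finset.sum_nat_mod, Finset.sum_congr rfl hc, Finset.sum_const,
      Finset.card_range, smul_eq_mul]
  have key : ((r₀ - 0 + 1) + ((∑ k ∈ Finset.range A, (r₀ - (2*k+1) + 1)) +
      (∑ k ∈ Finset.range B, (r₀ - (2*k+1) + 1)))) % 2 = 1 := by
    rcases Nat.mod_two_eq_zero_or_one r₀ with h2 | h2 <;>
      rw [h2] at hsumA hsumB <;> simp only [Nat.mul_zero, Nat.mul_one] at hsumA hsumB <;>
      omega
  exact key

open Classical in
theorem stmt13 (r₀ s₀ : ℕ) (h : s₀ ≤ r₀) :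
    (∑ p ∈ (Finset.range (r₀ + 1) ×ˢ Finset.range (s₀ + 1)).filter
        (fun p => p.2 ≤ p.1 ∧ p.1 - p.2 ≤ r₀ - s₀ ∧ p ≠ (r₀, s₀)),
      (r₀ - p.1 + 1) * (if good p then 1 else 0)) % 2 = 0
    ↔ good (r₀, s₀) := by
  classical
  have hset : (Finset.range (r₀ + 1) ×ˢ Finset.range (s₀ + 1)).filter
        (fun p => p.2 ≤ p.1 ∧ p.1 - p.2 ≤ r₀ - s₀ ∧ p ≠ (r₀, s₀))
      = ((Finset.range (r₀ + 1) ×ˢ Finset.range (s₀ + 1)).filter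
        (fun p => p.2 ≤ p.1 ∧ p.1 - p.2 ≤ r₀ - s₀)).erase (r₀, s₀) := by
    ext p
    simp only [Finset.mem_filter, Finset.mem_erase]
    tauto
  have hmem : (r₀, s₀) ∈ (Finset.range (r₀ + 1) ×ˢ Finset.range (s₀ + 1)).filter
        (fun p => p.2 ≤ p.1 ∧ p.1 - p.2 ≤ r₀ - s₀) := by
    simp only [Finset.mem_filter, Finset.mem_product, Finset.mem_range]
    omega
  have hT := T_odd r₀ s₀ h
  have hkey := Finset.sum_erase_add _
    (fun p : ℕ × ℕ => (r₀ - p.1 + 1) * (if good p then 1 else 0)) hmem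
  rw [hset]
  by_cases hg : good (r₀, s₀)
  · simp only [if_pos hg, Nat.sub_self, mul_one] at hkey
    constructor
    · intro; exact hg
    · intro; omega
  · simp only [if_neg hg, mul_zero, add_zero] at hkey
    constructor
    · intro hc; omega
    · intro hc; exact absurd hc hg
end
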